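/- arXiv:1112.5532 — 2 statements merged into one kernel-verified Lean document; each statement's English description precedes it below -/
import Mathlib

section
/- Let P_k and \hat P_k, k ≥ 0, be biorthonormal families of polynomials of degree k on the unit circle with respect to a weight ρ, i.e. (1/2πi)∮ P_j(z)\hat P_k(z^{-1})ρ(z)dz/z = δ_{jk}. Then the Christoffel–Darboux identity holds: Σ_{k=0}^{M-1} \hat P_k(z^{-1})P_k(w) = [z^{-M}P_M(z)·w^M \hat P_M(w^{-1}) − \hat P_M(z^{-1})P_M(w)] / (1 − w/z). -/
/-!
The pairing `⟪f, g⟫ = (2πi)⁻¹ ∮ f(z) g(z⁻¹) ρ(z) dz/z` is of Toeplitz type: it is unchanged when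
both arguments are multiplied by `X`, and under `(f, g) ↦ (g*, f*)`, where `*` is reversal at a
common degree bound. The identity holds for any bilinear form with these two symmetries.

The kernel `K_N(x, w) = ∑_{k<N} P̂_k(x) P_k(w)` reproduces polynomials of degree `< N`. With
`x = z⁻¹` the identity reads `K_{M+1}(x, w) - x w K_M(x, w) = P_M*(x) P̂_M*(w)`, both sides of
degree `≤ M` in `x`. They agree at `x = 0`, since `K_{M+1}(0, ·)` and `p P̂_M*`, with `p` the
leading coefficient of `P_M`, have the same pairings with `P̂_0, …, P̂_M`. Hence their difference
is `x G` with `deg G < M`, and `G` pairs to zero with `P_0, …, P_{M-1}`: by shift invariance the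
two kernel terms cancel, and `P_M*` is orthogonal to `X` times any polynomial of degree `< M`.
-/

open Finset
open scoped Polynomial

namespace Polynomial

section Semiring

variable {R : Type*} [Semiring R]

theorem mem_degreeLT_succ_iff {f : R[X]} {N : ℕ} :
    f ∈ degreeLT R (N + 1) ↔ f.natDegree ≤ N := by
  rw [degreeLT_succ_eq_degreeLE, mem_degreeLE, natDegree_le_iff_degree_le]

theorem reflect_mem_degreeLT_succ {f : R[X]} {N : ℕ} (hf : f ∈ degreeLT R (N + 1)) :
    reflect N f ∈ degreeLT R (N + 1) :=
  mem_degreeLT_succ_iff.mpr <|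
    natDegree_reflect_le.trans (max_le le_rfl (mem_degreeLT_succ_iff.mp hf))

theorem X_mul_mem_degreeLT_succ_iff [Nontrivial R] {g : R[X]} {N : ℕ} :
    X * g ∈ degreeLT R (N + 1) ↔ g ∈ degreeLT R N := by
  rw [mem_degreeLT, mem_degreeLT, (commute_X g).eq, degree_mul_X, Nat.cast_add, Nat.cast_one]
  exact WithBot.add_lt_add_iff_right (by simp)

end Semiring

variable {K : Type*} [Field K]

theorem eval_reflect_of_ne_zero {f : K[X]} {N : ℕ} {x : K} (hx : x ≠ 0)
    (hf : f.natDegree ≤ N) : (reflect N f).eval x = x ^ N * f.eval x⁻¹ := by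
  let := invertibleOfNonzero (inv_ne_zero hx)
  have := eval₂_reflect_mul_pow (RingHom.id K) x⁻¹ N f hf
  simp only [invOf_eq_inv, inv_inv, eval₂_id] at this
  rw [← this, mul_left_comm, ← mul_pow, mul_inv_cancel₀ hx, one_pow, mul_one]

noncomputable def christoffelKernel (P Q : ℕ → K[X]) (N : ℕ) (w : K) : K[X] :=
  ∑ k ∈ range N, (P k).eval w • Q k

theorem christoffelKernel_mem_degreeLT {P Q : ℕ → K[X]} (hQ : ∀ k, (Q k).degree = k)
    (N : ℕ) (w : K) : christoffelKernel P Q N w ∈ degreeLT K N :=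
  Submodule.sum_mem _ fun k hk =>
    Submodule.smul_mem _ _ (mem_degreeLT.mpr (by rw [hQ k]; exact_mod_cast mem_range.mp hk))

section Biorthonormal

variable (B : LinearMap.BilinForm K K[X]) {P Q : ℕ → K[X]}

theorem flip_apply_eq_ite (hPQ : ∀ j k, B (P j) (Q k) = if j = k then 1 else 0) (j k : ℕ) :
    B.flip (Q j) (P k) = if j = k then 1 else 0 := by
  simp [hPQ, eq_comm]

theorem eq_sum_pairing_smul (hP : ∀ k, (P k).degree = k)
    (hPQ : ∀ j k, B (P j) (Q k) = if j = k then 1 else 0) {N : ℕ} {f : K[X]}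
    (hf : f ∈ degreeLT K N) : f = ∑ k ∈ range N, B f (Q k) • P k := by
  let S : Sequence K := ⟨P, hP⟩
  suffices degreeLT K N ≤
      LinearMap.eqLocus LinearMap.id (∑ k ∈ range N, (B.flip (Q k)).smulRight (P k)) by
    simpa using this hf
  rw [← S.span_degreeLT fun i _ => (leadingCoeff_ne_zero.mpr (S.ne_zero i)).isUnit,
    Submodule.span_le]
  rintro _ ⟨i, hi, rfl⟩
  simp [S, hPQ, Set.mem_Iio.mp hi]

theorem eq_of_pairing_eq (hP : ∀ k, (P k).degree = k)
    (hPQ : ∀ j k, B (P j) (Q k) = if j = k then 1 else 0) {N : ℕ} {f g : K[X]}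
    (hf : f ∈ degreeLT K N) (hg : g ∈ degreeLT K N) (h : ∀ k < N, B f (Q k) = B g (Q k)) :
    f = g := by
  rw [eq_sum_pairing_smul B hP hPQ hf, eq_sum_pairing_smul B hP hPQ hg]
  exact sum_congr rfl fun k hk => by rw [h k (mem_range.mp hk)]

theorem coeff_eq_pairing_mul_coeff (hP : ∀ k, (P k).degree = k)
    (hPQ : ∀ j k, B (P j) (Q k) = if j = k then 1 else 0) {N : ℕ} {f : K[X]}
    (hf : f ∈ degreeLT K (N + 1)) : f.coeff N = B f (Q N) * (P N).coeff N := by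
  conv_lhs => rw [eq_sum_pairing_smul B hP hPQ hf]
  rw [finsetSum_coeff, sum_range_succ, sum_eq_zero, zero_add, coeff_smul, smul_eq_mul]
  intro k hk
  rw [coeff_smul, coeff_eq_zero_of_natDegree_lt, smul_zero]
  rw [natDegree_eq_of_degree_eq_some (hP k)]
  exact mem_range.mp hk

theorem pairing_christoffelKernel (hP : ∀ k, (P k).degree = k)
    (hPQ : ∀ j k, B (P j) (Q k) = if j = k then 1 else 0) {N : ℕ} {f : K[X]}
    (hf : f ∈ degreeLT K N) (w : K) : B f (christoffelKernel P Q N w) = f.eval w := by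
  conv_rhs => rw [eq_sum_pairing_smul B hP hPQ hf]
  simp [christoffelKernel, eval_finsetSum, mul_comm]

theorem christoffelKernel_swap_eval_zero (hP : ∀ k, (P k).degree = k)
    (hQ : ∀ k, (Q k).degree = k) (hPQ : ∀ j k, B (P j) (Q k) = if j = k then 1 else 0)
    (hreflect : ∀ N f g, f.natDegree ≤ N → g.natDegree ≤ N →
      B (reflect N g) (reflect N f) = B f g) (M : ℕ) :
    christoffelKernel Q P (M + 1) 0 = (P M).coeff M • reflect M (Q M) := by
  have hQmem : ∀ j < M + 1, Q j ∈ degreeLT K (M + 1) := fun j hj =>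
    mem_degreeLT.mpr (by rw [hQ j]; exact_mod_cast hj)
  refine eq_of_pairing_eq B hP hPQ (christoffelKernel_mem_degreeLT hP _ _)
    (Submodule.smul_mem _ _ (reflect_mem_degreeLT_succ (hQmem M M.lt_succ_self))) fun j hj => ?_
  have hQj := reflect_mem_degreeLT_succ (hQmem j hj)
  have hsymm := hreflect M (reflect M (Q j)) (Q M) (mem_degreeLT_succ_iff.mp hQj)
    (mem_degreeLT_succ_iff.mp (hQmem M M.lt_succ_self))
  rw [reflect_reflect] at hsymm
  rw [← B.flip_apply, pairing_christoffelKernel B.flip hQ (flip_apply_eq_ite B hPQ) (hQmem j hj),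
    map_smul, LinearMap.smul_apply, smul_eq_mul, hsymm, mul_comm,
    ← coeff_eq_pairing_mul_coeff B hP hPQ hQj, coeff_reflect, revAt_le le_rfl, Nat.sub_self,
    coeff_zero_eq_eval_zero]

theorem pairing_X_mul_reflect_eq_zero (hP : ∀ k, (P k).degree = k)
    (hQ : ∀ k, (Q k).degree = k) (hPQ : ∀ j k, B (P j) (Q k) = if j = k then 1 else 0)
    (hreflect : ∀ N f g, f.natDegree ≤ N → g.natDegree ≤ N →
      B (reflect N g) (reflect N f) = B f g) {M : ℕ} {f : K[X]} (hf : f ∈ degreeLT K M) :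
    B (X * f) (reflect M (P M)) = 0 := by
  have hXf := reflect_mem_degreeLT_succ (X_mul_mem_degreeLT_succ_iff.mpr hf)
  have hsymm := hreflect M (P M) (reflect M (X * f))
    (natDegree_eq_of_degree_eq_some (hP M)).le (mem_degreeLT_succ_iff.mp hXf)
  rw [reflect_reflect] at hsymm
  have hcoeff := coeff_eq_pairing_mul_coeff B.flip hQ (flip_apply_eq_ite B hPQ) hXf
  rw [coeff_reflect, revAt_le le_rfl, Nat.sub_self, coeff_X_mul_zero, eq_comm,
    mul_eq_zero] at hcoeff
  rw [hsymm]
  exact hcoeff.resolve_right (coeff_ne_zero_of_eq_degree (hQ M))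

theorem christoffelKernel_succ_sub_X_mul (hP : ∀ k, (P k).degree = k)
    (hQ : ∀ k, (Q k).degree = k) (hPQ : ∀ j k, B (P j) (Q k) = if j = k then 1 else 0)
    (hX : ∀ f g, B (X * f) (X * g) = B f g)
    (hreflect : ∀ N f g, f.natDegree ≤ N → g.natDegree ≤ N →
      B (reflect N g) (reflect N f) = B f g) (M : ℕ) (w : K) :
    christoffelKernel P Q (M + 1) w - w • X * christoffelKernel P Q M w =
      (reflect M (Q M)).eval w • reflect M (P M) := by
  rw [← sub_eq_zero]
  set F := christoffelKernel P Q (M + 1) w - w • X * christoffelKernel P Q M w -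
    (reflect M (Q M)).eval w • reflect M (P M) with hF
  have hFmem : F ∈ degreeLT K (M + 1) := by
    refine sub_mem (sub_mem (christoffelKernel_mem_degreeLT hQ _ _) ?_)
      (Submodule.smul_mem _ _ (reflect_mem_degreeLT_succ ?_))
    · rw [smul_mul_assoc]
      exact Submodule.smul_mem _ _
        (X_mul_mem_degreeLT_succ_iff.mpr (christoffelKernel_mem_degreeLT hQ _ _))
    · exact mem_degreeLT.mpr (by rw [hP M]; exact_mod_cast M.lt_succ_self)
  have hF0 : F.coeff 0 = 0 := by
    have h := congrArg (eval w) (christoffelKernel_swap_eval_zero B hP hQ hPQ hreflect M)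
    simp only [christoffelKernel, eval_finsetSum, eval_smul, smul_eq_mul] at h
    have hPM : (reflect M (P M)).eval 0 = (P M).coeff M := by
      rw [← coeff_zero_eq_eval_zero, coeff_reflect, revAt_zero]
    simp only [hF, coeff_zero_eq_eval_zero, christoffelKernel, eval_sub, eval_mul, eval_smul,
      eval_X, eval_finsetSum, smul_eq_mul, mul_zero, zero_mul, sub_zero, hPM]
    simp only [mul_comm] at h ⊢
    rw [h, sub_self]
  obtain ⟨G, hG⟩ := X_dvd_iff.mpr hF0
  suffices G = 0 by rw [hG, this, mul_zero]
  rw [hG] at hFmem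
  refine eq_of_pairing_eq B.flip hQ (flip_apply_eq_ite B hPQ)
    (X_mul_mem_degreeLT_succ_iff.mp hFmem) (zero_mem _) fun j hj => ?_
  have hPj : P j ∈ degreeLT K M := mem_degreeLT.mpr (by rw [hP j]; exact_mod_cast hj)
  rw [map_zero, LinearMap.zero_apply]
  calc B (P j) G = B (X * P j) F := by rw [hG, hX]
    _ = (X * P j).eval w - w * (P j).eval w -
          (reflect M (Q M)).eval w * B (X * P j) (reflect M (P M)) := by
      rw [hF, map_sub, map_sub, smul_mul_assoc, map_smul, map_smul, hX,
        pairing_christoffelKernel B hP hPQ (X_mul_mem_degreeLT_succ_iff.mpr hPj),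
        pairing_christoffelKernel B hP hPQ hPj, smul_eq_mul, smul_eq_mul]
    _ = 0 := by
      rw [pairing_X_mul_reflect_eq_zero B hP hQ hPQ hreflect hPj, eval_mul, eval_X]
      ring

end Biorthonormal

end Polynomial

open Polynomial

section CirclePairing

variable (ρ : ℂ → ℂ)

noncomputable def circlePairing (f g : ℂ[X]) : ℂ :=
  (2 * Real.pi * Complex.I)⁻¹ * ∮ z in C(0, 1), f.eval z * g.eval z⁻¹ * ρ z * z⁻¹

theorem circlePairing_X_mul_X_mul (f g : ℂ[X]) :
    circlePairing ρ (X * f) (X * g) = circlePairing ρ f g := by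
  unfold circlePairing
  congr 1
  refine circleIntegral.integral_congr zero_le_one fun z hz => ?_
  have hz0 : z ≠ 0 := by rintro rfl; simp at hz
  simp only [eval_mul, eval_X]
  field_simp

theorem circlePairing_reflect_reflect (N : ℕ) (f g : ℂ[X]) (hf : f.natDegree ≤ N)
    (hg : g.natDegree ≤ N) :
    circlePairing ρ (reflect N g) (reflect N f) = circlePairing ρ f g := by
  unfold circlePairing
  congr 1
  refine circleIntegral.integral_congr zero_le_one fun z hz => ?_
  have hz0 : z ≠ 0 := by rintro rfl; simp at hz
  have hpow : z ^ N * z⁻¹ ^ N = 1 := by rw [← mul_pow, mul_inv_cancel₀ hz0, one_pow]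
  simp only [eval_reflect_of_ne_zero hz0 hg, eval_reflect_of_ne_zero (inv_ne_zero hz0) hf, inv_inv]
  linear_combination (f.eval z * g.eval z⁻¹ * ρ z * z⁻¹) * hpow

variable {ρ}

theorem circleIntegrable_of_circlePairing_C_C_ne_zero {c d : ℂ}
    (h : circlePairing ρ (C c) (C d) ≠ 0) : CircleIntegrable (fun z => ρ z * z⁻¹) 0 1 := by
  by_contra hnot
  apply h
  have (z : ℂ) : (C c).eval z * (C d).eval z⁻¹ * ρ z * z⁻¹ = c * d * (ρ z * z⁻¹) := by
    simp only [eval_C]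
    ring
  simp only [circlePairing, this, circleIntegral.integral_const_mul,
    circleIntegral.integral_undef hnot, mul_zero]

theorem circleIntegrable_eval_mul_eval_inv (hρ : CircleIntegrable (fun z => ρ z * z⁻¹) 0 1)
    (f g : ℂ[X]) : CircleIntegrable (fun z => f.eval z * g.eval z⁻¹ * ρ z * z⁻¹) 0 1 := by
  have hcont : ContinuousOn (fun z => f.eval z * g.eval z⁻¹) (Metric.sphere 0 |1|) :=
    f.continuousOn.mul (g.continuous.comp_continuousOn
      (continuousOn_inv₀.mono fun z hz => by rintro rfl; simp at hz))
  have hmul : (fun z => f.eval z * g.eval z⁻¹ * ρ z * z⁻¹) =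
      (fun z => f.eval z * g.eval z⁻¹) * fun z => ρ z * z⁻¹ := by
    funext z
    simp only [Pi.mul_apply]
    ring
  rw [hmul]
  exact hρ.continuousOn_mul hcont

noncomputable def circlePairingForm (hρ : CircleIntegrable (fun z => ρ z * z⁻¹) 0 1) :
    LinearMap.BilinForm ℂ ℂ[X] :=
  LinearMap.mk₂ ℂ (circlePairing ρ)
    (fun f₁ f₂ g => by
      simp only [circlePairing, eval_add, add_mul]
      rw [circleIntegral.integral_add (circleIntegrable_eval_mul_eval_inv hρ f₁ g)
        (circleIntegrable_eval_mul_eval_inv hρ f₂ g), mul_add])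
    (fun c f g => by
      have (z : ℂ) : c * f.eval z * g.eval z⁻¹ * ρ z * z⁻¹ =
          c * (f.eval z * g.eval z⁻¹ * ρ z * z⁻¹) := by ring
      simp only [circlePairing, eval_smul, smul_eq_mul, this, circleIntegral.integral_const_mul]
      ring)
    (fun f g₁ g₂ => by
      simp only [circlePairing, eval_add, mul_add, add_mul]
      rw [circleIntegral.integral_add (circleIntegrable_eval_mul_eval_inv hρ f g₁)
        (circleIntegrable_eval_mul_eval_inv hρ f g₂), mul_add])
    (fun c f g => by
      have (z : ℂ) : f.eval z * (c * g.eval z⁻¹) * ρ z * z⁻¹ =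
          c * (f.eval z * g.eval z⁻¹ * ρ z * z⁻¹) := by ring
      simp only [circlePairing, eval_smul, smul_eq_mul, this, circleIntegral.integral_const_mul]
      ring)

end CirclePairing

/-- Christoffel–Darboux formula for biorthonormal polynomials on the unit circle:
if `P_k`, `P̂_k` are polynomials of degree `k` with
`(1/2πi)∮ P_j(z) P̂_k(z⁻¹) ρ(z) dz/z = δ_{jk}`, then
`∑_{k<M} P̂_k(z⁻¹) P_k(w)
  = [z^{-M} P_M(z) w^M P̂_M(w⁻¹) − P̂_M(z⁻¹) P_M(w)] / (1 − w/z)`. -/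
theorem christoffel_darboux_circle
    (ρ : ℂ → ℂ) (P Phat : ℕ → Polynomial ℂ)
    (hdegP : ∀ k, (P k).degree = (k : ℕ))
    (hdegPhat : ∀ k, (Phat k).degree = (k : ℕ))
    (horth : ∀ j k : ℕ,
      (2 * Real.pi * Complex.I)⁻¹ *
          (∮ z in C(0, 1), (P j).eval z * (Phat k).eval z⁻¹ * ρ z * z⁻¹)
        = if j = k then 1 else 0)
    (M : ℕ) (z w : ℂ) (hz : z ≠ 0) (hw : w ≠ 0) (hzw : w ≠ z) :
    (∑ k ∈ Finset.range M, (Phat k).eval z⁻¹ * (P k).eval w)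
      = (z ^ (-(M : ℤ)) * (P M).eval z * w ^ (M : ℤ) * (Phat M).eval w⁻¹
          - (Phat M).eval z⁻¹ * (P M).eval w) / (1 - w / z) := by
  have hρ : CircleIntegrable (fun z => ρ z * z⁻¹) 0 1 := by
    refine circleIntegrable_of_circlePairing_C_C_ne_zero (c := (P 0).coeff 0)
      (d := (Phat 0).coeff 0) ?_
    rw [← eq_C_of_degree_eq_zero (hdegP 0), ← eq_C_of_degree_eq_zero (hdegPhat 0), circlePairing,
      horth, if_pos rfl]
    exact one_ne_zero
  have hCD := congrArg (eval z⁻¹) (christoffelKernel_succ_sub_X_mul (circlePairingForm hρ)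
    hdegP hdegPhat horth (circlePairing_X_mul_X_mul ρ) (circlePairing_reflect_reflect ρ) M w)
  simp only [christoffelKernel, sum_range_succ, eval_sub, eval_add, eval_mul, eval_smul, eval_X,
    eval_finsetSum, smul_eq_mul, inv_inv,
    eval_reflect_of_ne_zero hw (natDegree_eq_of_degree_eq_some (hdegPhat M)).le,
    eval_reflect_of_ne_zero (inv_ne_zero hz) (natDegree_eq_of_degree_eq_some (hdegP M)).le] at hCD
  rw [eq_div_iff (sub_ne_zero.mpr fun h => hzw ((div_eq_one_iff_eq hz).mp h.symm)), zpow_neg,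
    zpow_natCast, zpow_natCast, div_eq_mul_inv, ← inv_pow]
  simp only [mul_comm ((Phat _).eval z⁻¹)]
  linear_combination hCD
end

section
/- For a function F(z,w) holomorphic in both variables in an annular region containing the contours, the interchange-of-contours identity holds: (1/2πi)² ∮_{Γ_{0,a}} dz ∮_{Γ_{0,a,z}} dw F(z,w)/(w−z) = (1/2πi)² ∮_{Γ_{0,a}} dw ∮_{Γ_{0,a,w}} dz F(z,w)/(w−z) + (1/2πi)∮_{Γ_{0,a}} F(z,z) dz. -/
open Complex MeasureTheory Metric Set Function Filter
open scoped Real Topology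

/-!
For `z` on the circle of radius `r`, shrinking the `w`-contour from radius `R` to some `ρ < r`
sweeps across the simple pole `w = z`, whose residue `F z z` is split off with `dslope (F z) z`.
On the remaining circles `|z| = r`, `|w| = ρ` the kernel `F z w / (w - z)` is continuous, so the
order of integration may be swapped; the two contours can then be moved one at a time (`z` out
to `R`, then `w` out to `r`) without meeting the pole, and a last swap gives the right-hand side.
-/

section CircleIntegralComm

variable {E : Type*} [NormedAddCommGroup E] {c₁ c₂ : ℂ} {r₁ r₂ : ℝ}
  {f : ℂ → ℂ → E}

theorem ContinuousOn.continuous_comp_circleMap_prod (h₁ : 0 ≤ r₁) (h₂ : 0 ≤ r₂)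
    (hf : ContinuousOn (uncurry f) (sphere c₁ r₁ ×ˢ sphere c₂ r₂)) :
    Continuous fun p : ℝ × ℝ => f (circleMap c₁ r₁ p.1) (circleMap c₂ r₂ p.2) :=
  hf.comp_continuous
    ((continuous_circleMap _ _).comp continuous_fst |>.prodMk
      ((continuous_circleMap _ _).comp continuous_snd)) fun _ =>
    ⟨circleMap_mem_sphere _ h₁ _, circleMap_mem_sphere _ h₂ _⟩

variable [NormedSpace ℂ E]

theorem ContinuousOn.circleIntegrable_circleIntegral (h₁ : 0 ≤ r₁) (h₂ : 0 ≤ r₂)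
    (hf : ContinuousOn (uncurry f) (sphere c₁ r₁ ×ˢ sphere c₂ r₂)) :
    CircleIntegrable (fun z => ∮ w in C(c₂, r₂), f z w) c₁ r₁ := by
  have hcont := hf.continuous_comp_circleMap_prod h₁ h₂
  have hg : Continuous (uncurry fun θ φ =>
      deriv (circleMap c₂ r₂) φ • f (circleMap c₁ r₁ θ) (circleMap c₂ r₂ φ)) := by
    simp only [deriv_circleMap]
    exact ((continuous_circleMap _ _).comp continuous_snd |>.mul continuous_const).smul hcont
  exact (intervalIntegral.continuous_parametric_intervalIntegral_of_continuous' hg _ _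
    ).intervalIntegrable _ _

theorem circleIntegral_circleIntegral_comm (h₁ : 0 ≤ r₁) (h₂ : 0 ≤ r₂)
    (hf : ContinuousOn (uncurry f) (sphere c₁ r₁ ×ˢ sphere c₂ r₂)) :
    (∮ z in C(c₁, r₁), ∮ w in C(c₂, r₂), f z w)
      = ∮ w in C(c₂, r₂), ∮ z in C(c₁, r₁), f z w := by
  have hcont := hf.continuous_comp_circleMap_prod h₁ h₂
  set g : ℝ → ℝ → E := fun θ φ => deriv (circleMap c₁ r₁) θ •
    deriv (circleMap c₂ r₂) φ • f (circleMap c₁ r₁ θ) (circleMap c₂ r₂ φ)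
  have hg : Continuous (uncurry g) := by
    simp only [g, deriv_circleMap]
    exact ((continuous_circleMap _ _).comp continuous_fst |>.mul continuous_const).smul
      (((continuous_circleMap _ _).comp continuous_snd |>.mul continuous_const).smul hcont)
  calc (∮ z in C(c₁, r₁), ∮ w in C(c₂, r₂), f z w)
      = ∫ θ in (0)..2 * π, ∫ φ in (0)..2 * π, g θ φ := by
        simp only [circleIntegral, g, intervalIntegral.integral_smul]
    _ = ∫ φ in (0)..2 * π, ∫ θ in (0)..2 * π, g θ φ :=
        intervalIntegral_intervalIntegral_swap <|
          (hg.continuousOn.integrableOn_compact (isCompact_uIcc.prod isCompact_uIcc)).mono_set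
            (prod_mono uIoc_subset_uIcc uIoc_subset_uIcc)
    _ = ∮ w in C(c₂, r₂), ∮ z in C(c₁, r₁), f z w := by
        simp only [circleIntegral, g, intervalIntegral.integral_smul,
          smul_comm (deriv (circleMap c₁ r₁) _)]

end CircleIntegralComm

section Annulus

variable {c : ℂ} {r R : ℝ}

theorem sphere_subset_closedBall_diff_ball {ρ : ℝ} (hr : r ≤ ρ) (hR : ρ ≤ R) :
    sphere c ρ ⊆ closedBall c R \ ball c r := fun _ hw =>
  ⟨mem_closedBall.2 ((mem_sphere.1 hw).le.trans hR),
    fun h => (mem_ball.1 h).not_ge (hr.trans (mem_sphere.1 hw).ge)⟩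

theorem closedBall_diff_ball_mem_nhds {z : ℂ} (hz : z ∈ ball c R \ closedBall c r) :
    closedBall c R \ ball c r ∈ 𝓝 z :=
  mem_of_superset ((isOpen_ball.sdiff isClosed_closedBall).mem_nhds hz)
    (sdiff_subset_sdiff ball_subset_closedBall ball_subset_closedBall)

theorem DifferentiableOn.circleIntegral_eq_of_annulus {E : Type*} [NormedAddCommGroup E]
    [NormedSpace ℂ E] [CompleteSpace E] {f : ℂ → E} (h0 : 0 < r) (hle : r ≤ R)
    (hf : DifferentiableOn ℂ f (closedBall c R \ ball c r)) :
    (∮ z in C(c, R), f z) = ∮ z in C(c, r), f z :=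
  circleIntegral_eq_of_differentiable_on_annulus_off_countable h0 hle countable_empty
    hf.continuousOn fun _ hz => hf.differentiableAt (closedBall_diff_ball_mem_nhds hz.1)

theorem DifferentiableOn.circleIntegral_div_sub_of_mem_annulus {z : ℂ} {g : ℂ → ℂ}
    (h0 : 0 < r) (hz : z ∈ ball c R \ closedBall c r)
    (hg : DifferentiableOn ℂ g (closedBall c R \ ball c r)) :
    (∮ w in C(c, R), g w / (w - z)) = (∮ w in C(c, r), g w / (w - z)) + 2 * π * I * g z := by
  have hrR : r ≤ R := (lt_of_not_ge (hz.2 ∘ mem_closedBall.2)).le.trans (mem_ball.1 hz.1).le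
  have hslope := (differentiableOn_dslope (closedBall_diff_ball_mem_nhds hz)).2 hg
  have hsplit : ∀ ρ, r ≤ ρ → ρ ≤ R → z ∉ sphere c ρ →
      (∮ w in C(c, ρ), g w / (w - z))
      = (∮ w in C(c, ρ), dslope g z w) + g z * ∮ w in C(c, ρ), (w - z)⁻¹ := by
    intro ρ hrρ hρR hzρ
    have hpolar : ContinuousOn (fun w => g z * (w - z)⁻¹) (sphere c ρ) :=
      continuousOn_const.mul <| (continuousOn_id.sub continuousOn_const).inv₀ fun _ hw =>
        sub_ne_zero.2 (ne_of_mem_of_not_mem hw hzρ)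
    rw [← circleIntegral.integral_const_mul, ← circleIntegral.integral_add
      ((hslope.continuousOn.mono (sphere_subset_closedBall_diff_ball hrρ hρR)).circleIntegrable
        (h0.le.trans hrρ)) (hpolar.circleIntegrable (h0.le.trans hrρ))]
    refine circleIntegral.integral_congr (h0.le.trans hrρ) fun w hw => ?_
    have hwz : w - z ≠ 0 := sub_ne_zero.2 (ne_of_mem_of_not_mem hw hzρ)
    simp only [dslope_of_ne _ (sub_ne_zero.1 hwz), slope_def_field]
    field_simp
    ring
  have hin : (∮ w in C(c, R), (w - z)⁻¹) = 2 * π * I :=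
    circleIntegral.integral_sub_inv_of_mem_ball hz.1
  have hout : (∮ w in C(c, r), (w - z)⁻¹) = 0 :=
    DiffContOnCl.circleIntegral_eq_zero h0.le <|
      (((differentiableOn_id (s := {z}ᶜ)).sub_const z).inv fun _ hw => sub_ne_zero.2 hw
        ).diffContOnCl_ball fun _ hw hwz => hz.2 (hwz ▸ hw)
  rw [hsplit R hrR le_rfl fun h => (mem_ball.1 hz.1).ne (mem_sphere.1 h),
    hsplit r le_rfl hrR fun h => hz.2 (sphere_subset_closedBall h), hin, hout,
    hslope.circleIntegral_eq_of_annulus h0 hrR]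
  ring

end Annulus

section DoubleContour

variable {c : ℂ} {F : ℂ → ℂ → ℂ}

theorem ContinuousOn.div_sub_sphere_prod {r₁ r₂ : ℝ}
    (hF : ContinuousOn (uncurry F) (sphere c r₁ ×ˢ sphere c r₂)) (hne : r₁ ≠ r₂) :
    ContinuousOn (uncurry fun z w => F z w / (w - z)) (sphere c r₁ ×ˢ sphere c r₂) :=
  hF.div (continuous_snd.sub continuous_fst).continuousOn fun p hp h => hne <| by
    rw [← mem_sphere.1 hp.1, ← mem_sphere.1 hp.2, sub_eq_zero.1 h]

variable {ρ r R : ℝ}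

theorem circleIntegral_circleIntegral_div_sub_eq_add_residue (hρ : 0 < ρ) (hρr : ρ < r)
    (hrR : r < R)
    (hF : DifferentiableOn ℂ (uncurry F)
      ((closedBall c R \ ball c ρ) ×ˢ (closedBall c R \ ball c ρ))) :
    (∮ z in C(c, r), ∮ w in C(c, R), F z w / (w - z))
      = (∮ z in C(c, r), ∮ w in C(c, ρ), F z w / (w - z))
        + 2 * π * I * ∮ z in C(c, r), F z z := by
  have hr₀ : 0 ≤ r := (hρ.trans hρr).le
  have hsphere : sphere c r ⊆ closedBall c R \ ball c ρ :=
    sphere_subset_closedBall_diff_ball hρr.le hrR.le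
  have hres : ∀ z ∈ sphere c r, (∮ w in C(c, R), F z w / (w - z))
      = (∮ w in C(c, ρ), F z w / (w - z)) + 2 * π * I * F z z := fun z hz =>
    DifferentiableOn.circleIntegral_div_sub_of_mem_annulus hρ
      ⟨mem_ball.2 ((mem_sphere.1 hz).trans_lt hrR),
        fun h => (mem_closedBall.1 h).not_gt ((mem_sphere.1 hz) ▸ hρr)⟩
      (hF.comp ((differentiableOn_const z).prodMk differentiableOn_id) fun _ hw =>
        ⟨hsphere hz, hw⟩)
  have hinner : CircleIntegrable (fun z => ∮ w in C(c, ρ), F z w / (w - z)) c r :=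
    ((hF.continuousOn.mono (prod_mono hsphere
      (sphere_subset_closedBall_diff_ball le_rfl (hρr.trans hrR).le))).div_sub_sphere_prod
        hρr.ne').circleIntegrable_circleIntegral hr₀ hρ.le
  have hdiag : CircleIntegrable (fun z => 2 * π * I * F z z) c r :=
    (continuousOn_const.mul <| hF.continuousOn.comp (continuousOn_id.prodMk continuousOn_id)
      fun _ hz => ⟨hsphere hz, hsphere hz⟩).circleIntegrable hr₀
  rw [circleIntegral.integral_congr hr₀ hres, circleIntegral.integral_add hinner hdiag,
    circleIntegral.integral_const_mul]

theorem circleIntegral_circleIntegral_div_sub_eq_swap_of_lt (hρ : 0 < ρ) (hρr : ρ < r)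
    (hrR : r < R)
    (hF : DifferentiableOn ℂ (uncurry F)
      ((closedBall c R \ ball c ρ) ×ˢ (closedBall c R \ ball c ρ))) :
    (∮ z in C(c, r), ∮ w in C(c, ρ), F z w / (w - z))
      = ∮ w in C(c, r), ∮ z in C(c, R), F z w / (w - z) := by
  have hρR := hρr.trans hrR
  have hsphere : ∀ {t}, ρ ≤ t → t ≤ R → sphere c t ⊆ closedBall c R \ ball c ρ :=
    sphere_subset_closedBall_diff_ball
  have hkernel : ∀ {r₁ r₂}, ρ ≤ r₁ → r₁ ≤ R → ρ ≤ r₂ → r₂ ≤ R → r₁ ≠ r₂ →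
      ContinuousOn (uncurry fun z w => F z w / (w - z)) (sphere c r₁ ×ˢ sphere c r₂) :=
    fun h₁ h₁' h₂ h₂' =>
      (hF.continuousOn.mono (prod_mono (hsphere h₁ h₁') (hsphere h₂ h₂'))).div_sub_sphere_prod
  have hdeform_z : ∀ w ∈ sphere c ρ, (∮ z in C(c, R), F z w / (w - z))
      = ∮ z in C(c, r), F z w / (w - z) := fun w hw =>
    DifferentiableOn.circleIntegral_eq_of_annulus (hρ.trans hρr) hrR.le <|
      ((hF.comp (differentiableOn_id.prodMk (differentiableOn_const w)) fun _ hz =>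
          ⟨hz, hsphere le_rfl hρR.le hw⟩).mono
        (sdiff_subset_sdiff_right (ball_subset_ball hρr.le))).div
        (differentiableOn_const w |>.sub differentiableOn_id) fun _ hz h =>
          hz.2 (sub_eq_zero.1 h ▸ mem_ball.2 ((mem_sphere.1 hw).trans_lt hρr))
  have hdeform_w : ∀ z ∈ sphere c R, (∮ w in C(c, r), F z w / (w - z))
      = ∮ w in C(c, ρ), F z w / (w - z) := fun z hz =>
    DifferentiableOn.circleIntegral_eq_of_annulus hρ hρr.le <|
      ((hF.comp ((differentiableOn_const z).prodMk differentiableOn_id) fun _ hw =>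
          ⟨hsphere hρR.le le_rfl hz, hw⟩).mono
        (sdiff_subset_sdiff_left (closedBall_subset_closedBall hrR.le))).div
        (differentiableOn_id.sub_const z) fun _ hw h =>
          (mem_closedBall.1 (sub_eq_zero.1 h ▸ hw.1)).not_gt ((mem_sphere.1 hz).symm ▸ hrR)
  calc (∮ z in C(c, r), ∮ w in C(c, ρ), F z w / (w - z))
      = ∮ w in C(c, ρ), ∮ z in C(c, r), F z w / (w - z) :=
        circleIntegral_circleIntegral_comm (hρ.trans hρr).le hρ.le
          (hkernel hρr.le hrR.le le_rfl hρR.le hρr.ne')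
    _ = ∮ w in C(c, ρ), ∮ z in C(c, R), F z w / (w - z) :=
        (circleIntegral.integral_congr hρ.le hdeform_z).symm
    _ = ∮ z in C(c, R), ∮ w in C(c, ρ), F z w / (w - z) :=
        (circleIntegral_circleIntegral_comm (hρ.trans hρR).le hρ.le
          (hkernel hρR.le le_rfl le_rfl hρR.le hρR.ne')).symm
    _ = ∮ z in C(c, R), ∮ w in C(c, r), F z w / (w - z) :=
        (circleIntegral.integral_congr (hρ.trans hρR).le hdeform_w).symm
    _ = ∮ w in C(c, r), ∮ z in C(c, R), F z w / (w - z) :=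
        circleIntegral_circleIntegral_comm (hρ.trans hρR).le (hρ.trans hρr).le
          (hkernel hρR.le le_rfl hρr.le hrR.le hrR.ne')

end DoubleContour

theorem contour_interchange_general (a r R : ℝ) (ha : 0 < a) (har : a < r) (hrR : r < R)
    (U : Set ℂ) (hball : Metric.closedBall 0 R ⊆ U)
    (F : ℂ → ℂ → ℂ)
    (hF : DifferentiableOn ℂ (fun p : ℂ × ℂ => F p.1 p.2)
      ((U \ {0, (a : ℂ)}) ×ˢ (U \ {0, (a : ℂ)}))) :
    ((2 * Real.pi * Complex.I)⁻¹) ^ 2 *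
        (∮ z in C(0, r), ∮ w in C(0, R), F z w / (w - z))
      = ((2 * Real.pi * Complex.I)⁻¹) ^ 2 *
          (∮ w in C(0, r), ∮ z in C(0, R), F z w / (w - z))
        + (2 * Real.pi * Complex.I)⁻¹ * ∮ z in C(0, r), F z z := by
  obtain ⟨ρ, haρ, hρr⟩ := exists_between har
  have hannulus : closedBall (0 : ℂ) R \ ball 0 ρ ⊆ U \ {0, (a : ℂ)} := by
    rintro z ⟨hzR, hzρ⟩
    rw [mem_ball_zero_iff, not_lt] at hzρ
    refine ⟨hball hzR, ?_⟩
    rintro (rfl | rfl)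
    · rw [norm_zero] at hzρ; linarith
    · rw [norm_real, Real.norm_of_nonneg ha.le] at hzρ; linarith
  have hF' := hF.mono (prod_mono hannulus hannulus)
  rw [circleIntegral_circleIntegral_div_sub_eq_add_residue (ha.trans haρ) hρr hrR hF',
    circleIntegral_circleIntegral_div_sub_eq_swap_of_lt (ha.trans haρ) hρr hrR hF']
  field_simp

/-- Interchange-of-contours identity: for `F(z,w)` holomorphic in both variables in a
neighborhood of the disk of radius `R` except at the points `0` and `a`
(with `0 < a < r < R`),
`(1/2πi)² ∮_{|z|=r} dz ∮_{|w|=R} dw F(z,w)/(w−z)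
  = (1/2πi)² ∮_{|w|=r} dw ∮_{|z|=R} dz F(z,w)/(w−z) + (1/2πi)∮_{|z|=r} F(z,z) dz`. -/
theorem contour_interchange (a r R : ℝ) (ha : 0 < a) (har : a < r) (hrR : r < R)
    (U : Set ℂ) (hU : IsOpen U) (hball : Metric.closedBall 0 R ⊆ U)
    (F : ℂ → ℂ → ℂ)
    (hF : DifferentiableOn ℂ (fun p : ℂ × ℂ => F p.1 p.2)
      ((U \ {0, (a : ℂ)}) ×ˢ (U \ {0, (a : ℂ)}))) :
    ((2 * Real.pi * Complex.I)⁻¹) ^ 2 *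
        (∮ z in C(0, r), ∮ w in C(0, R), F z w / (w - z))
      = ((2 * Real.pi * Complex.I)⁻¹) ^ 2 *
          (∮ w in C(0, r), ∮ z in C(0, R), F z w / (w - z))
        + (2 * Real.pi * Complex.I)⁻¹ * ∮ z in C(0, r), F z z :=
  contour_interchange_general a r R ha har hrR U hball F hF
end
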